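/- Let U be a quasitriangular Hopf algebra over a field k with R-matrix R = R'ᵢ ⊗ R''ᵢ. Then the Drinfeld map Φ : U* ⊇ O → U, Φ(φ) = (φ ⊗ id)(R₂₁R) (where R₂₁ = R''ᵢ ⊗ R'ᵢ), is an algebra morphism from the transmutation product ⊙ on O, given by φ ⊙ ψ = (R'ᵢ ▷ φ ◁ R'ⱼ)(ψ ◁ S(R''ᵢ)R''ⱼ), to the product of U. Equivalently Φ(φ ⊙ ψ) = Φ(φ)Φ(ψ), and moreover Φ intertwines the coadjoint action on O with the adjoint action on U: Φ(h₍₂₎ ▷ φ ◁ S(h₍₁₎)) = h₍₁₎ Φ(φ) S(h₍₂₎). -/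

import Mathlib

open Coalgebra TensorProduct

section

variable {k U : Type*} [Field k] [Ring U] [HopfAlgebra k U]
variable {ι : Type*} [Fintype ι]

/-- Convolution product of two linear functionals on a coalgebra:
`(f * g)(x) = f(x₍₁₎) g(x₍₂₎)`. -/
noncomputable def convDual (f g : Module.Dual k U) : Module.Dual k U :=
  LinearMap.mul' k k ∘ₗ TensorProduct.map f g ∘ₗ Coalgebra.comul

/-- The Drinfeld map `Φ(φ) = (φ ⊗ id)(R₂₁ R)`, for the R-matrix
`R = ∑ᵢ R₁ i ⊗ R₂ i`:  `Φ(φ) = ∑ᵢⱼ φ(R''ᵢ R'ⱼ) R'ᵢ R''ⱼ`. -/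
noncomputable def drinfeldMap (R₁ R₂ : ι → U) (φ : Module.Dual k U) : U :=
  ∑ i : ι, ∑ j : ι, φ (R₂ i * R₁ j) • (R₁ i * R₂ j)

/-- The transmutation product on the dual:
`φ ⊙ ψ = (R'ᵢ ▷ φ ◁ R'ⱼ) · (ψ ◁ S(R''ᵢ)R''ⱼ)` (with implicit sums over `i, j`), where
`(h ▷ φ)(x) = φ(xh)`, `(φ ◁ h)(x) = φ(hx)` and `·` is the convolution product. -/
noncomputable def transmuteMul (R₁ R₂ : ι → U) (φ ψ : Module.Dual k U) :
    Module.Dual k U :=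
  ∑ i : ι, ∑ j : ι,
    convDual (φ ∘ₗ LinearMap.mulLeft k (R₁ j) ∘ₗ LinearMap.mulRight k (R₁ i))
      (ψ ∘ₗ LinearMap.mulLeft k (HopfAlgebra.antipode (R := k) (R₂ i) * R₂ j))

end

/-!
Write `R = ∑ᵢ R₁ i ⊗ R₂ i` and `Q = R₂₁ R`, so that `Φ(φ) = (φ ⊗ id)(Q)`.

Equivariance: `R Δ = Δᵒᵖ R` makes `Q` commute with `Δ(U)`, and for such a `Q`
`∑ (S h₁ ⊗ 1) Q (h₂ ⊗ 1) = ∑ (1 ⊗ h₁) Q (1 ⊗ S h₂)`: write `h₂ ⊗ 1 = Δ(h₂)(1 ⊗ S h₃)`, move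
`Δ(h₂)` through `Q` and use `(S h₁ ⊗ 1) Δ(h₂) = 1 ⊗ h₁`. Slicing with `φ` gives the claim.

Multiplicativity: unwinding `⊙`, `Φ(φ ⊙ ψ)` is the `φ ⊗ ψ ⊗ id` slice of
`∑ᵢ (1 ⊗ S R₂ᵢ ⊗ 1) R₁₂ (Δ ⊗ id)(Q) (R₁ᵢ ⊗ 1 ⊗ 1)`, and `(Δ ⊗ id)(Q) = R₃₂ R₃₁ R₁₃ R₂₃`.
Two instances of the Yang–Baxter equation with permuted legs carry `R₁₂` past `R₃₂ R₃₁ R₁₃`,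
leaving `R₃₁ R₁₃ · ∑ᵢ (1 ⊗ S R₂ᵢ ⊗ 1) R₁₂ (R₁ᵢ ⊗ 1 ⊗ 1) · R₃₂ R₂₃`. By `(id ⊗ Δ)R = R₁₃ R₁₂`
and the antipode axiom the middle factor is `(id ⊗ ε)(R) ⊗ 1 ⊗ 1`, which `R₁₃` absorbs by the
counit axiom. What remains is `Q₁₃ Q₂₃`, whose slice is `Φ(φ) Φ(ψ)`.
-/

universe w

namespace Coalgebra.Repr

variable {R A : Type*} [CommSemiring R] [AddCommMonoid A] [Module R A] [CoalgebraStruct R A]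
  {a : A}

/-- `ℛ k a` is indexed by `A × A`, while the hypotheses of the theorem only accept representations
indexed in one fixed universe `w`. -/
noncomputable def uLiftFin {κ : Type*} (r : Repr R a κ) :
    Repr R a (ULift.{w} (Fin r.index.card)) where
  index := Finset.univ
  left i := r.left (r.index.equivFin.symm i.down)
  right i := r.right (r.index.equivFin.symm i.down)
  eq := by
    rw [← r.eq, ← Finset.sum_coe_sort r.index]
    exact Fintype.sum_equiv (Equiv.ulift.trans r.index.equivFin.symm) _ _ fun _ => rfl

end Coalgebra.Repr

section Legs

variable {k U : Type*} [CommSemiring k] [Semiring U] [Algebra k U] {ι : Type*} [Fintype ι]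

local notation "τ" => Algebra.TensorProduct.comm k U U

variable (k) in
noncomputable def sumTmul (a b : ι → U) : U ⊗[k] U :=
  ∑ i, a i ⊗ₜ b i

variable (k U)

noncomputable def leg₁₂ : U ⊗[k] U →ₐ[k] U ⊗[k] (U ⊗[k] U) :=
  (Algebra.TensorProduct.assoc k k k U U U).toAlgHom.comp Algebra.TensorProduct.includeLeft

noncomputable def leg₁₃ : U ⊗[k] U →ₐ[k] U ⊗[k] (U ⊗[k] U) :=
  (Algebra.TensorProduct.map (AlgHom.id k U) (τ).toAlgHom).comp
    (leg₁₂ k U)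

noncomputable def leg₂₃ : U ⊗[k] U →ₐ[k] U ⊗[k] (U ⊗[k] U) :=
  Algebra.TensorProduct.includeRight

noncomputable def cycle₃ : U ⊗[k] (U ⊗[k] U) ≃ₐ[k] U ⊗[k] (U ⊗[k] U) :=
  (Algebra.TensorProduct.comm k U (U ⊗[k] U)).trans (Algebra.TensorProduct.assoc k k k U U U)

noncomputable def swap₂₃ : U ⊗[k] (U ⊗[k] U) ≃ₐ[k] U ⊗[k] (U ⊗[k] U) :=
  Algebra.TensorProduct.congr AlgEquiv.refl (τ)

variable {k U}

@[simp] lemma leg₁₂_tmul (a b : U) : leg₁₂ k U (a ⊗ₜ b) = a ⊗ₜ (b ⊗ₜ 1) := rfl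
@[simp] lemma leg₁₃_tmul (a b : U) : leg₁₃ k U (a ⊗ₜ b) = a ⊗ₜ (1 ⊗ₜ b) := rfl
@[simp] lemma leg₂₃_tmul (a b : U) : leg₂₃ k U (a ⊗ₜ b) = 1 ⊗ₜ (a ⊗ₜ b) := rfl
@[simp] lemma cycle₃_tmul (a b c : U) : cycle₃ k U (a ⊗ₜ (b ⊗ₜ c)) = b ⊗ₜ (c ⊗ₜ a) := rfl
@[simp] lemma swap₂₃_tmul (a b c : U) : swap₂₃ k U (a ⊗ₜ (b ⊗ₜ c)) = a ⊗ₜ (c ⊗ₜ b) := rfl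

lemma cycle₃_leg₁₂ (t : U ⊗[k] U) :
    cycle₃ k U (leg₁₂ k U t) = leg₁₃ k U (τ t) := by
  induction t using TensorProduct.induction_on <;> simp_all

lemma cycle₃_leg₁₃ (t : U ⊗[k] U) :
    cycle₃ k U (leg₁₃ k U t) = leg₂₃ k U (τ t) := by
  induction t using TensorProduct.induction_on <;> simp_all

lemma cycle₃_leg₂₃ (t : U ⊗[k] U) : cycle₃ k U (leg₂₃ k U t) = leg₁₂ k U t := by
  induction t using TensorProduct.induction_on <;> simp_all

lemma swap₂₃_leg₁₂ (t : U ⊗[k] U) : swap₂₃ k U (leg₁₂ k U t) = leg₁₃ k U t := by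
  induction t using TensorProduct.induction_on <;> simp_all

lemma swap₂₃_leg₁₃ (t : U ⊗[k] U) : swap₂₃ k U (leg₁₃ k U t) = leg₁₂ k U t := by
  induction t using TensorProduct.induction_on <;> simp_all

lemma swap₂₃_leg₂₃ (t : U ⊗[k] U) :
    swap₂₃ k U (leg₂₃ k U t) = leg₂₃ k U (τ t) := by
  induction t using TensorProduct.induction_on <;> simp_all

lemma leg₁₃_mul_leg₁₂_sumTmul (a b : ι → U) :
    leg₁₃ k U (sumTmul k a b) * leg₁₂ k U (sumTmul k a b) =
      ∑ i, ∑ j, (a i * a j) ⊗ₜ (b j ⊗ₜ b i) := by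
  simp [sumTmul, map_sum, Finset.sum_mul_sum, Algebra.TensorProduct.tmul_mul_tmul]

lemma commute_one_tmul_tmul_one_leg₁₃ (x : U) (t : U ⊗[k] U) :
    Commute ((1 : U) ⊗ₜ[k] (x ⊗ₜ[k] (1 : U))) (leg₁₃ k U t) := by
  induction t using TensorProduct.induction_on with
  | zero => simp
  | tmul a b => exact (Commute.one_left a).tmul ((Commute.one_right x).tmul (Commute.one_left b))
  | add t t' ht ht' => simpa using ht.add_right ht'

lemma commute_tmul_one_leg₂₃ (x : U) (t : U ⊗[k] U) :
    Commute (x ⊗ₜ[k] ((1 : U) ⊗ₜ[k] (1 : U))) (leg₂₃ k U t) := by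
  induction t using TensorProduct.induction_on with
  | zero => simp
  | tmul a b => exact (Commute.one_right x).tmul ((Commute.one_left a).tmul (Commute.one_left b))
  | add t t' ht ht' => simpa using ht.add_right ht'

def IsYangBaxter (t : U ⊗[k] U) : Prop :=
  leg₁₂ k U t * leg₁₃ k U t * leg₂₃ k U t = leg₂₃ k U t * leg₁₃ k U t * leg₁₂ k U t

lemma IsYangBaxter.cycle {t : U ⊗[k] U} (hybe : IsYangBaxter t) :
    leg₁₂ k U t * leg₂₃ k U (τ t) *
        leg₁₃ k U (τ t) =
      leg₁₃ k U (τ t) *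
        leg₂₃ k U (τ t) * leg₁₂ k U t := by
  simpa only [map_mul, cycle₃_leg₁₂, cycle₃_leg₁₃, cycle₃_leg₂₃]
    using (congrArg (cycle₃ k U) hybe).symm

lemma IsYangBaxter.swap {t : U ⊗[k] U} (hybe : IsYangBaxter t) :
    leg₂₃ k U (τ t) * leg₁₂ k U t * leg₁₃ k U t =
      leg₁₃ k U t * leg₁₂ k U t * leg₂₃ k U (τ t) := by
  simpa only [map_mul, swap₂₃_leg₁₂, swap₂₃_leg₁₃, swap₂₃_leg₂₃]
    using (congrArg (swap₂₃ k U) hybe).symm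

lemma commute_comm_mul_self_of_mul_eq {t d : U ⊗[k] U}
    (h : t * d = τ d * t) :
    Commute d (τ t * t) := by
  have hflip : d * τ t =
      τ t * τ d := by
    have hcc : τ (τ d) = d := by
      simpa only [Algebra.TensorProduct.comm_symm] using
        (τ).symm_apply_apply d
    simpa only [map_mul, hcc] using (congrArg (τ) h).symm
  rw [Commute, SemiconjBy, ← mul_assoc, hflip, mul_assoc, ← h, mul_assoc]

lemma Finset.sum_mul_sum_mul_sum {A : Type*} [NonUnitalNonAssocSemiring A] (a b c : ι → A) :
    (∑ i, a i) * (∑ j, b j) * (∑ l, c l) = ∑ i, ∑ j, ∑ l, a i * b j * c l := by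
  rw [Finset.sum_mul_sum, Finset.sum_mul_sum]
  simp only [Finset.sum_mul]
  exact Finset.sum_congr rfl fun i _ => Finset.sum_comm

lemma isYangBaxter_sumTmul_iff {R₁ R₂ : ι → U} :
    IsYangBaxter (sumTmul k R₁ R₂) ↔
      ∑ i, ∑ j, ∑ l, (R₁ i * R₁ j) ⊗ₜ[k] ((R₂ i * R₁ l) ⊗ₜ[k] (R₂ j * R₂ l)) =
        ∑ i, ∑ j, ∑ l, (R₁ j * R₁ l) ⊗ₜ[k] ((R₁ i * R₂ l) ⊗ₜ[k] (R₂ i * R₂ j)) := by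
  simp [IsYangBaxter, sumTmul, map_sum, Finset.sum_mul_sum_mul_sum,
    Algebra.TensorProduct.tmul_mul_tmul]

end Legs

section Slice

variable {k A M : Type*} [CommSemiring k] [AddCommMonoid A] [Module k A]
  [AddCommMonoid M] [Module k M]

noncomputable def sliceLeft (φ : A →ₗ[k] k) : A ⊗[k] M →ₗ[k] M :=
  TensorProduct.lid k M ∘ₗ φ.rTensor M

@[simp] lemma sliceLeft_tmul (φ : A →ₗ[k] k) (a : A) (m : M) :
    sliceLeft φ (a ⊗ₜ m) = φ a • m := rfl

noncomputable def sliceLeft₂ (φ ψ : A →ₗ[k] k) : A ⊗[k] (A ⊗[k] M) →ₗ[k] M :=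
  sliceLeft φ ∘ₗ (sliceLeft ψ).lTensor A

@[simp] lemma sliceLeft₂_tmul (φ ψ : A →ₗ[k] k) (a b : A) (m : M) :
    sliceLeft₂ φ ψ (a ⊗ₜ (b ⊗ₜ m)) = φ a • ψ b • m := rfl

end Slice

section SliceAlgebra

variable {k U : Type*} [CommSemiring k] [Semiring U] [Algebra k U]

lemma sliceLeft_one_tmul_mul_mul (φ : U →ₗ[k] k) (a b : U) (X : U ⊗[k] U) :
    sliceLeft φ ((1 ⊗ₜ a) * X * (1 ⊗ₜ b)) = a * sliceLeft φ X * b := by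
  induction X using TensorProduct.induction_on with
  | zero => simp
  | tmul x y => simp [Algebra.TensorProduct.tmul_mul_tmul]
  | add X Y hX hY => simp [mul_add, add_mul, hX, hY]

lemma sliceLeft_tmul_one_mul_mul (φ : U →ₗ[k] k) (a b : U) (X : U ⊗[k] U) :
    sliceLeft φ ((a ⊗ₜ 1) * X * (b ⊗ₜ 1)) =
      sliceLeft (φ ∘ₗ LinearMap.mulLeft k a ∘ₗ LinearMap.mulRight k b) X := by
  induction X using TensorProduct.induction_on with
  | zero => simp
  | tmul x y => simp [Algebra.TensorProduct.tmul_mul_tmul, mul_assoc]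
  | add X Y hX hY => simp [mul_add, add_mul, hX, hY]

lemma sliceLeft₂_leg₁₃_mul_leg₂₃ (φ ψ : U →ₗ[k] k) (X Y : U ⊗[k] U) :
    sliceLeft₂ φ ψ (leg₁₃ k U X * leg₂₃ k U Y) = sliceLeft φ X * sliceLeft ψ Y := by
  induction X using TensorProduct.induction_on with
  | zero => simp
  | add X X' hX hX' => simp [add_mul, hX, hX']
  | tmul a b =>
    induction Y using TensorProduct.induction_on with
    | zero => simp
    | add Y Y' hY hY' => simp only [map_add, mul_add, hY, hY']
    | tmul c d =>
      simp only [leg₁₃_tmul, leg₂₃_tmul, Algebra.TensorProduct.tmul_mul_tmul, one_mul, mul_one,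
        sliceLeft₂_tmul, sliceLeft_tmul, smul_mul_smul_comm]
      exact (mul_smul _ _ _).symm

end SliceAlgebra

section Bialgebra

variable {k U : Type*} [CommSemiring k] [Semiring U] [Bialgebra k U] {ι : Type*} [Fintype ι]
  {R₁ R₂ : ι → U}

local notation "𝓡" => sumTmul k R₁ R₂

variable (k U) in
noncomputable def comulLeft : U ⊗[k] U →ₐ[k] U ⊗[k] (U ⊗[k] U) :=
  (Algebra.TensorProduct.assoc k k k U U U).toAlgHom.comp
    (Algebra.TensorProduct.map (Bialgebra.comulAlgHom k U) (AlgHom.id k U))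

variable (k U) in
noncomputable def comulRight : U ⊗[k] U →ₐ[k] U ⊗[k] (U ⊗[k] U) :=
  Algebra.TensorProduct.map (AlgHom.id k U) (Bialgebra.comulAlgHom k U)

lemma comulLeft_tmul (a b : U) :
    comulLeft k U (a ⊗ₜ b) = TensorProduct.assoc k U U U (comul a ⊗ₜ b) := rfl

lemma comulRight_tmul (a b : U) : comulRight k U (a ⊗ₜ b) = a ⊗ₜ comul b := rfl

lemma comulLeft_comm (t : U ⊗[k] U) :
    comulLeft k U (Algebra.TensorProduct.comm k U U t) = cycle₃ k U (comulRight k U t) := by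
  induction t using TensorProduct.induction_on with
  | zero => simp
  | add t t' ht ht' => simp [ht, ht']
  | tmul a b =>
    rw [Algebra.TensorProduct.comm_tmul, comulLeft_tmul, comulRight_tmul]
    induction (comul (R := k) b) using TensorProduct.induction_on with
    | zero => simp
    | add w w' hw hw' => simp [add_tmul, tmul_add, hw, hw']
    | tmul x y => rfl

/-- Without invertibility of `R` one cannot conclude `(id ⊗ ε)(R) = 1`; this weaker identity
suffices. -/
lemma sumTmul_mul_counit_tmul_one
    (hΔr : comulRight k U 𝓡 = leg₁₃ k U 𝓡 * leg₁₂ k U 𝓡) :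
    𝓡 * ((∑ i, counit (R := k) (R₂ i) • R₁ i) ⊗ₜ 1) = 𝓡 := by
  have hcounit := congrArg
    (((TensorProduct.lid k U).toLinearMap ∘ₗ (counit (R := k) (A := U)).rTensor U).lTensor U) hΔr
  rw [leg₁₃_mul_leg₁₂_sumTmul] at hcounit
  simp only [sumTmul, map_sum, comulRight_tmul, LinearMap.lTensor_tmul, LinearMap.coe_comp,
    LinearEquiv.coe_coe, Function.comp_apply, rTensor_counit_comul, TensorProduct.lid_tmul,
    one_smul, LinearMap.rTensor_tmul, tmul_smul] at hcounit
  simp only [sumTmul, Finset.sum_mul, Finset.mul_sum, Algebra.TensorProduct.tmul_mul_tmul,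
    mul_one, mul_smul_comm, sum_tmul]
  conv_rhs => rw [hcounit]
  simp only [smul_tmul']
  exact Finset.sum_comm

lemma mul_comul_eq_of_repr
    (hcomm : ∀ (x : U) {κ : Type w} (r : Coalgebra.Repr k x κ),
      ∑ i, ∑ m ∈ r.index, (R₁ i * r.left m) ⊗ₜ[k] (R₂ i * r.right m) =
      ∑ i, ∑ m ∈ r.index, (r.right m * R₁ i) ⊗ₜ[k] (r.left m * R₂ i)) (x : U) :
    𝓡 * comul x = Algebra.TensorProduct.comm k U U (comul x) * 𝓡 := by
  have h := hcomm x (ℛ k x).uLiftFin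
  rw [← (ℛ k x).uLiftFin.eq]
  simpa [sumTmul, map_sum, Finset.sum_mul_sum, Algebra.TensorProduct.tmul_mul_tmul]
    using h.trans Finset.sum_comm

lemma comulLeft_eq_of_repr
    (hΔl : ∀ (κ : ι → Type w) (r : ∀ i, Coalgebra.Repr k (R₁ i) (κ i)),
      ∑ i, ∑ m ∈ (r i).index, ((r i).left m ⊗ₜ[k] (r i).right m) ⊗ₜ[k] R₂ i =
      ∑ i, ∑ j, (R₁ i ⊗ₜ[k] R₁ j) ⊗ₜ[k] (R₂ i * R₂ j)) :
    comulLeft k U 𝓡 = leg₁₃ k U 𝓡 * leg₂₃ k U 𝓡 := by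
  have h := congrArg (TensorProduct.assoc k U U U)
    (hΔl _ fun i => (ℛ k (R₁ i)).uLiftFin)
  simp only [← sum_tmul, Coalgebra.Repr.eq] at h
  simpa [sumTmul, map_sum, comulLeft_tmul, Finset.sum_mul_sum,
    Algebra.TensorProduct.tmul_mul_tmul] using h

lemma comulRight_eq_of_repr
    (hΔr : ∀ (κ : ι → Type w) (r : ∀ i, Coalgebra.Repr k (R₂ i) (κ i)),
      ∑ i, ∑ m ∈ (r i).index, R₁ i ⊗ₜ[k] ((r i).left m ⊗ₜ[k] (r i).right m) =
      ∑ i, ∑ j, (R₁ i * R₁ j) ⊗ₜ[k] (R₂ j ⊗ₜ[k] R₂ i)) :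
    comulRight k U 𝓡 = leg₁₃ k U 𝓡 * leg₁₂ k U 𝓡 := by
  have h := hΔr _ fun i => (ℛ k (R₂ i)).uLiftFin
  simp only [← tmul_sum, Coalgebra.Repr.eq] at h
  rw [leg₁₃_mul_leg₁₂_sumTmul]
  simpa [sumTmul, map_sum, comulRight_tmul] using h

end Bialgebra

section Hopf

variable {k U : Type*} [CommSemiring k] [Semiring U] [HopfAlgebra k U] {ι : Type*} [Fintype ι]

local notation "S" => HopfAlgebra.antipode k

lemma sum_comul_mul_one_tmul_antipode {y : U} {κ : Type*} (r : Repr k y κ) :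
    ∑ n ∈ r.index, comul (R := k) (r.left n) * (1 ⊗ₜ S (r.right n)) = y ⊗ₜ[k] (1 : U) := by
  have hcoassoc := congrArg ((LinearMap.mul' k U ∘ₗ (S).lTensor U).lTensor U)
    (sum_tmul_tmul_eq r (fun n => ℛ k (r.left n)) (fun n => ℛ k (r.right n)))
  have hcounit := congrArg ((Algebra.linearMap k U).lTensor U) (sum_tmul_counit_eq r)
  simp only [map_sum, LinearMap.lTensor_tmul, LinearMap.coe_comp, Function.comp_apply,
    LinearMap.mul'_apply, ← tmul_sum, HopfAlgebra.sum_mul_antipode_eq_algebraMap_counit]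
    at hcoassoc hcounit
  calc ∑ n ∈ r.index, comul (R := k) (r.left n) * (1 ⊗ₜ S (r.right n))
      = ∑ n ∈ r.index, ∑ j ∈ (ℛ k (r.left n)).index,
          (ℛ k (r.left n)).left j ⊗ₜ[k] ((ℛ k (r.left n)).right j * S (r.right n)) := by
        refine Finset.sum_congr rfl fun n _ => ?_
        simp [← (ℛ k (r.left n)).eq, Finset.sum_mul, Algebra.TensorProduct.tmul_mul_tmul]
    _ = y ⊗ₜ[k] 1 := by simpa [hcoassoc] using hcounit

lemma sum_antipode_tmul_one_mul_comul {y : U} {κ : Type*} (r : Repr k y κ) :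
    ∑ n ∈ r.index, (S (r.left n) ⊗ₜ 1) * comul (R := k) (r.right n) = (1 : U) ⊗ₜ[k] y := by
  have hcoassoc := congrArg (((LinearMap.mul' k U ∘ₗ (S).rTensor U).rTensor U)
      ∘ₗ (TensorProduct.assoc k U U U).symm.toLinearMap)
    (sum_tmul_tmul_eq r (fun n => ℛ k (r.left n)) (fun n => ℛ k (r.right n)))
  have hcounit := congrArg ((Algebra.linearMap k U).rTensor U) (sum_counit_tmul_eq r)
  simp only [map_sum, LinearMap.coe_comp, Function.comp_apply, LinearEquiv.coe_coe,
    TensorProduct.assoc_symm_tmul, LinearMap.rTensor_tmul, LinearMap.mul'_apply, ← sum_tmul,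
    HopfAlgebra.sum_antipode_mul_eq_algebraMap_counit] at hcoassoc hcounit
  calc ∑ n ∈ r.index, (S (r.left n) ⊗ₜ 1) * comul (R := k) (r.right n)
      = ∑ n ∈ r.index, ∑ j ∈ (ℛ k (r.right n)).index,
          (S (r.left n) * (ℛ k (r.right n)).left j) ⊗ₜ[k] (ℛ k (r.right n)).right j := by
        refine Finset.sum_congr rfl fun n _ => ?_
        simp [← (ℛ k (r.right n)).eq, Finset.mul_sum, Algebra.TensorProduct.tmul_mul_tmul]
    _ = 1 ⊗ₜ[k] y := by simpa [← hcoassoc] using hcounit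

variable (k) in
noncomputable def sandwichMap (Q : U ⊗[k] U) : U ⊗[k] (U ⊗[k] U) →ₗ[k] U ⊗[k] U :=
  TensorProduct.lift <| (LinearMap.mul k (U ⊗[k] U)).compl₁₂
    (Algebra.TensorProduct.includeLeft.toLinearMap ∘ₗ S) <|
    TensorProduct.lift <| (LinearMap.mul k (U ⊗[k] U)).compl₁₂
      (LinearMap.mulRight k Q ∘ₗ comul) (Algebra.TensorProduct.includeRight.toLinearMap ∘ₗ S)

@[simp] lemma sandwichMap_tmul (Q : U ⊗[k] U) (x y z : U) :
    sandwichMap k Q (x ⊗ₜ (y ⊗ₜ z)) = (S x ⊗ₜ 1) * (comul y * Q * (1 ⊗ₜ S z)) := rfl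

lemma sum_antipode_sandwich_eq_of_commute_comul (Q : U ⊗[k] U)
    (hQ : ∀ z : U, Commute (comul (R := k) z) Q) {h : U} {κ : Type*} (r : Repr k h κ) :
    ∑ m ∈ r.index, (S (r.left m) ⊗ₜ 1) * Q * (r.right m ⊗ₜ 1) =
      ∑ m ∈ r.index, (1 ⊗ₜ r.left m) * Q * (1 ⊗ₜ S (r.right m)) := by
  have hcoassoc := congrArg (sandwichMap k Q)
    (sum_tmul_tmul_eq r (fun m => ℛ k (r.left m)) (fun m => ℛ k (r.right m)))
  simp only [map_sum, sandwichMap_tmul] at hcoassoc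
  calc ∑ m ∈ r.index, (S (r.left m) ⊗ₜ 1) * Q * (r.right m ⊗ₜ 1)
      = ∑ m ∈ r.index, ∑ n ∈ (ℛ k (r.right m)).index, (S (r.left m) ⊗ₜ 1) *
          (comul ((ℛ k (r.right m)).left n) * Q * (1 ⊗ₜ S ((ℛ k (r.right m)).right n))) := by
        refine Finset.sum_congr rfl fun m _ => ?_
        rw [← sum_comul_mul_one_tmul_antipode (ℛ k (r.right m)), Finset.mul_sum]
        refine Finset.sum_congr rfl fun n _ => ?_
        rw [(hQ _).eq]
        simp only [mul_assoc]
    _ = ∑ m ∈ r.index, (1 ⊗ₜ r.left m) * Q * (1 ⊗ₜ S (r.right m)) := by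
        rw [← hcoassoc]
        refine Finset.sum_congr rfl fun m _ => ?_
        simp only [← mul_assoc, ← Finset.sum_mul, sum_antipode_tmul_one_mul_comul]

noncomputable def transmuteOp (R₁ R₂ : ι → U) (X : U ⊗[k] (U ⊗[k] U)) : U ⊗[k] (U ⊗[k] U) :=
  ∑ i, (1 ⊗ₜ (S (R₂ i) ⊗ₜ 1)) * leg₁₂ k U (sumTmul k R₁ R₂) * X * (R₁ i ⊗ₜ (1 ⊗ₜ 1))

variable {R₁ R₂ : ι → U}

local notation "𝓡" => sumTmul k R₁ R₂
local notation "𝓡₂₁" => Algebra.TensorProduct.comm k U U (sumTmul k R₁ R₂)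

lemma transmuteOp_one
    (hΔr : comulRight k U 𝓡 = leg₁₃ k U 𝓡 * leg₁₂ k U 𝓡) :
    transmuteOp R₁ R₂ 1 = (∑ i, counit (R := k) (R₂ i) • R₁ i) ⊗ₜ[k] ((1 : U) ⊗ₜ[k] (1 : U)) := by
  have hantipode := congrArg
    (leg₁₂ k U ∘ (LinearMap.mul' k U ∘ₗ (S).rTensor U).lTensor U) hΔr
  rw [leg₁₃_mul_leg₁₂_sumTmul] at hantipode
  simp only [sumTmul, map_sum, comulRight_tmul, Function.comp_apply, LinearMap.lTensor_tmul,
    LinearMap.coe_comp, HopfAlgebra.mul_antipode_rTensor_comul_apply, leg₁₂_tmul,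
    LinearMap.rTensor_tmul, LinearMap.mul'_apply] at hantipode
  simp only [transmuteOp, sumTmul, map_sum, leg₁₂_tmul, mul_one, Finset.mul_sum, Finset.sum_mul,
    Algebra.TensorProduct.tmul_mul_tmul, one_mul]
  rw [Finset.sum_comm, ← hantipode, sum_tmul]
  refine Finset.sum_congr rfl fun i _ => ?_
  rw [Algebra.algebraMap_eq_smul_one (A := U),
    ← smul_tmul' (counit (R := k) (R₂ i)) (1 : U) (1 : U), ← smul_tmul (counit (R := k) (R₂ i)) (R₁ i) ((1 : U) ⊗ₜ[k] (1 : U))]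

lemma transmuteOp_conj (hybe : IsYangBaxter 𝓡) :
    transmuteOp R₁ R₂ (leg₂₃ k U 𝓡₂₁ * leg₁₃ k U 𝓡₂₁ * (leg₁₃ k U 𝓡 * leg₂₃ k U 𝓡)) =
      leg₁₃ k U 𝓡₂₁ * leg₁₃ k U 𝓡 * transmuteOp R₁ R₂ 1 * (leg₂₃ k U 𝓡₂₁ * leg₂₃ k U 𝓡) := by
  have hcycle (X : U ⊗[k] (U ⊗[k] U)) :
      leg₁₂ k U 𝓡 * (leg₂₃ k U 𝓡₂₁ * (leg₁₃ k U 𝓡₂₁ * X)) =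
        leg₁₃ k U 𝓡₂₁ * (leg₂₃ k U 𝓡₂₁ * (leg₁₂ k U 𝓡 * X)) := by
    simp only [← mul_assoc, hybe.cycle]
  have hswap (X : U ⊗[k] (U ⊗[k] U)) :
      leg₂₃ k U 𝓡₂₁ * (leg₁₂ k U 𝓡 * (leg₁₃ k U 𝓡 * X)) =
        leg₁₃ k U 𝓡 * (leg₁₂ k U 𝓡 * (leg₂₃ k U 𝓡₂₁ * X)) := by
    simp only [← mul_assoc, hybe.swap]
  simp only [transmuteOp, Finset.mul_sum, Finset.sum_mul]
  refine Finset.sum_congr rfl fun i _ => ?_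
  have hs (t : U ⊗[k] U) := commute_one_tmul_tmul_one_leg₁₃ (S (R₂ i)) t
  have he (t : U ⊗[k] U) := commute_tmul_one_leg₂₃ (R₁ i) t
  simp only [mul_one, mul_assoc]
  rw [hcycle, hswap, (hs _).left_comm, (hs _).left_comm, ← (he _).eq, ← mul_assoc (leg₂₃ k U 𝓡₂₁),
    ← (he _).eq, mul_assoc]

lemma transmuteOp_comulLeft (hybe : IsYangBaxter 𝓡)
    (hΔl : comulLeft k U 𝓡 = leg₁₃ k U 𝓡 * leg₂₃ k U 𝓡)
    (hΔr : comulRight k U 𝓡 = leg₁₃ k U 𝓡 * leg₁₂ k U 𝓡) :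
    transmuteOp R₁ R₂ (comulLeft k U (𝓡₂₁ * 𝓡)) =
      leg₁₃ k U (𝓡₂₁ * 𝓡) * leg₂₃ k U (𝓡₂₁ * 𝓡) := by
  have hΔ₂₁ : comulLeft k U 𝓡₂₁ = leg₂₃ k U 𝓡₂₁ * leg₁₃ k U 𝓡₂₁ := by
    rw [comulLeft_comm, hΔr, map_mul, cycle₃_leg₁₃, cycle₃_leg₁₂]
  rw [map_mul, hΔ₂₁, hΔl, transmuteOp_conj hybe, transmuteOp_one hΔr, mul_assoc (leg₁₃ k U 𝓡₂₁),
    ← leg₁₃_tmul, ← map_mul (leg₁₃ k U) 𝓡, sumTmul_mul_counit_tmul_one hΔr, map_mul, map_mul]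

end Hopf

section

variable {k U : Type*} [Field k] [Ring U] [HopfAlgebra k U]
variable {ι : Type*} [Fintype ι]

local notation "S" => HopfAlgebra.antipode k

section

variable {R₁ R₂ : ι → U}

local notation "𝓡" => sumTmul k R₁ R₂
local notation "𝓡₂₁" => Algebra.TensorProduct.comm k U U (sumTmul k R₁ R₂)

lemma drinfeldMap_eq_sliceLeft (φ : Module.Dual k U) :
    drinfeldMap R₁ R₂ φ = sliceLeft φ (𝓡₂₁ * 𝓡) := by
  simp [drinfeldMap, sumTmul, Finset.sum_mul_sum, map_sum,
    Algebra.TensorProduct.tmul_mul_tmul]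

lemma drinfeldMap_sum {κ : Type*} (s : Finset κ) (φ : κ → Module.Dual k U) :
    drinfeldMap R₁ R₂ (∑ m ∈ s, φ m) = ∑ m ∈ s, drinfeldMap R₁ R₂ (φ m) := by
  simp only [drinfeldMap, LinearMap.coe_sum, Finset.sum_apply, Finset.sum_smul]
  exact (Finset.sum_congr rfl fun i _ => Finset.sum_comm).trans Finset.sum_comm

lemma sliceLeft_transmuteMul (φ ψ : Module.Dual k U) (T : U ⊗[k] U) :
    sliceLeft (transmuteMul R₁ R₂ φ ψ) T =
      sliceLeft₂ φ ψ (transmuteOp R₁ R₂ (comulLeft k U T)) := by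
  induction T using TensorProduct.induction_on with
  | zero => simp [transmuteOp]
  | add T T' hT hT' =>
    simp only [map_add, Finset.sum_add_distrib, mul_add, add_mul, hT, hT', transmuteOp]
  | tmul x y =>
    simp only [comulLeft_tmul, sliceLeft_tmul, transmuteMul, convDual, LinearMap.coe_sum,
      Finset.sum_apply, LinearMap.coe_comp, Function.comp_apply]
    rw [← (ℛ k x).eq]
    simp only [LinearMap.mulLeft_mul, map_sum, TensorProduct.map_tmul, LinearMap.coe_comp,
      Function.comp_apply, LinearMap.mulRight_apply, LinearMap.mulLeft_apply, LinearMap.mul'_apply,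
      Finset.sum_smul, mul_smul, transmuteOp, sumTmul, leg₁₂_tmul, Finset.mul_sum,
      Algebra.TensorProduct.tmul_mul_tmul, one_mul, mul_one, sum_tmul, TensorProduct.assoc_tmul,
      Finset.sum_mul, mul_assoc, sliceLeft₂_tmul]
    exact Finset.sum_congr rfl fun _ _ => Finset.sum_comm

lemma drinfeldMap_transmuteMul (hybe : IsYangBaxter 𝓡)
    (hΔl : comulLeft k U 𝓡 = leg₁₃ k U 𝓡 * leg₂₃ k U 𝓡)
    (hΔr : comulRight k U 𝓡 = leg₁₃ k U 𝓡 * leg₁₂ k U 𝓡) (φ ψ : Module.Dual k U) :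
    drinfeldMap R₁ R₂ (transmuteMul R₁ R₂ φ ψ) = drinfeldMap R₁ R₂ φ * drinfeldMap R₁ R₂ ψ := by
  rw [drinfeldMap_eq_sliceLeft, sliceLeft_transmuteMul, transmuteOp_comulLeft hybe hΔl hΔr,
    sliceLeft₂_leg₁₃_mul_leg₂₃, ← drinfeldMap_eq_sliceLeft, ← drinfeldMap_eq_sliceLeft]

lemma drinfeldMap_adjoint
    (hR : ∀ x : U, 𝓡 * comul x = Algebra.TensorProduct.comm k U U (comul x) * 𝓡)
    (h : U) (φ : Module.Dual k U) {κ : Type*} (r : Coalgebra.Repr k h κ) :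
    ∑ m ∈ r.index, r.left m * drinfeldMap R₁ R₂ φ * S (r.right m) =
      drinfeldMap R₁ R₂ (∑ m ∈ r.index,
        φ ∘ₗ LinearMap.mulLeft k (S (r.left m)) ∘ₗ LinearMap.mulRight k (r.right m)) := by
  have hQ (z : U) := commute_comm_mul_self_of_mul_eq (hR z)
  rw [drinfeldMap_sum]
  simp only [drinfeldMap_eq_sliceLeft, ← sliceLeft_one_tmul_mul_mul, ← sliceLeft_tmul_one_mul_mul,
    ← map_sum]
  rw [← sum_antipode_sandwich_eq_of_commute_comul _ hQ r]

end

/-- Let `U` be a quasitriangular Hopf algebra over a field `k`, with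
R-matrix `R = ∑ᵢ R'ᵢ ⊗ R''ᵢ` satisfying `(Δ ⊗ id)(R) = R₁₃R₂₃`, `(id ⊗ Δ)(R) = R₁₃R₁₂`,
`R Δ(x) = Δᵒᵖ(x) R` and the Yang–Baxter equation.  Then the Drinfeld map
`Φ(φ) = (φ ⊗ id)(R₂₁R)` is an algebra morphism from the transmutation product `⊙` to the
product of `U`:  `Φ(φ ⊙ ψ) = Φ(φ)Φ(ψ)`; moreover `Φ` intertwines the coadjoint action on
the dual with the adjoint action:  `Φ(h₍₂₎ ▷ φ ◁ S(h₍₁₎)) = h₍₁₎ Φ(φ) S(h₍₂₎)`. -/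
theorem drinfeldMap_transmutation (R₁ R₂ : ι → U)
    -- `R Δ(x) = Δᵒᵖ(x) R`:
    (ax_comm : ∀ (x : U) {κ : Type*} (r : Coalgebra.Repr k x κ),
      ∑ i : ι, ∑ m ∈ r.index, (R₁ i * r.left m) ⊗ₜ[k] (R₂ i * r.right m) =
      ∑ i : ι, ∑ m ∈ r.index, (r.right m * R₁ i) ⊗ₜ[k] (r.left m * R₂ i))
    -- `(Δ ⊗ id)(R) = R₁₃ R₂₃`:
    (ax_delta_left : ∀ (κ : ι → Type*) (r : ∀ i : ι, Coalgebra.Repr k (R₁ i) (κ i)),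
      ∑ i : ι, ∑ m ∈ (r i).index, ((r i).left m ⊗ₜ[k] (r i).right m) ⊗ₜ[k] R₂ i =
      ∑ i : ι, ∑ j : ι, (R₁ i ⊗ₜ[k] R₁ j) ⊗ₜ[k] (R₂ i * R₂ j))
    -- `(id ⊗ Δ)(R) = R₁₃ R₁₂`:
    (ax_delta_right : ∀ (κ : ι → Type*) (r : ∀ i : ι, Coalgebra.Repr k (R₂ i) (κ i)),
      ∑ i : ι, ∑ m ∈ (r i).index, R₁ i ⊗ₜ[k] ((r i).left m ⊗ₜ[k] (r i).right m) =
      ∑ i : ι, ∑ j : ι, (R₁ i * R₁ j) ⊗ₜ[k] (R₂ j ⊗ₜ[k] R₂ i))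
    -- Yang–Baxter equation `R₁₂ R₁₃ R₂₃ = R₂₃ R₁₃ R₁₂`:
    (ax_ybe : ∑ i : ι, ∑ j : ι, ∑ l : ι,
        (R₁ i * R₁ j) ⊗ₜ[k] ((R₂ i * R₁ l) ⊗ₜ[k] (R₂ j * R₂ l)) =
      ∑ i : ι, ∑ j : ι, ∑ l : ι,
        (R₁ j * R₁ l) ⊗ₜ[k] ((R₁ i * R₂ l) ⊗ₜ[k] (R₂ i * R₂ j))) :
    (∀ φ ψ : Module.Dual k U,
      drinfeldMap R₁ R₂ (transmuteMul R₁ R₂ φ ψ) =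
        drinfeldMap R₁ R₂ φ * drinfeldMap R₁ R₂ ψ) ∧
    (∀ (h : U) (φ : Module.Dual k U) {κ : Type*} (r : Coalgebra.Repr k h κ),
      ∑ m ∈ r.index, r.left m * drinfeldMap R₁ R₂ φ *
          HopfAlgebra.antipode (R := k) (r.right m) =
        drinfeldMap R₁ R₂ (∑ m ∈ r.index,
          φ ∘ₗ LinearMap.mulLeft k (HopfAlgebra.antipode (R := k) (r.left m)) ∘ₗ
            LinearMap.mulRight k (r.right m))) :=
  ⟨drinfeldMap_transmuteMul (isYangBaxter_sumTmul_iff.mpr ax_ybe)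
      (comulLeft_eq_of_repr ax_delta_left) (comulRight_eq_of_repr ax_delta_right),
    fun h φ _ r => drinfeldMap_adjoint (mul_comul_eq_of_repr ax_comm) h φ r⟩

end
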